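/- For Poisson(λ)-distributed i.i.d. variables Y_1,…,Y_n with 0 < λ < log n, combining the MGF bound with the optimal choice of t gives E[max_i Y_i] ≤ (log n − λ) / W((log n − λ)/(eλ)), where W is the Lambert W function (the inverse of x ↦ x e^x on [0,∞)). -/

import Mathlib

/-!
By Jensen's inequality and `exp (t · max_i Y_i) ≤ ∑_i exp (t · Y_i)`,
`exp (t · E[max_i Y_i]) ≤ n · E[exp (t · Y_1)] = n · exp (λ (eᵗ - 1))`, i.e.
`E[max_i Y_i] ≤ (log n + λ (eᵗ - 1)) / t` for every `t > 0`. Taking `t = 1 + w` with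
`w = W((log n - λ)/(eλ))` gives `λ eᵗ = (log n - λ)/w`, and the bound
collapses to `(log n - λ)/w`.
-/

open MeasureTheory ProbabilityTheory Finset Real
open scoped NNReal Nat

namespace ProbabilityTheory

lemma hasSum_poisson_mul_exp (r : ℝ≥0) (t : ℝ) :
    HasSum (fun n : ℕ ↦ exp (-r) * r ^ n / n ! * exp (t * n)) (exp (r * (exp t - 1))) := by
  have h := (NormedSpace.expSeries_div_hasSum_exp ((r : ℝ) * exp t)).mul_left (exp (-r))
  rw [← exp_eq_exp_ℝ, ← exp_add, show -(r : ℝ) + r * exp t = r * (exp t - 1) by ring] at h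
  have e : (fun n : ℕ ↦ exp (-r) * r ^ n / n ! * exp (t * n)) =
      fun n ↦ exp (-r) * ((r * exp t) ^ n / n !) := by
    funext n
    rw [mul_pow, ← exp_nat_mul, mul_comm (n : ℝ) t]
    ring
  rw [e]
  exact h

lemma integrable_exp_mul_poissonMeasure (r : ℝ≥0) (t : ℝ) :
    Integrable (fun n : ℕ ↦ exp (t * n)) (poissonMeasure r) := by
  simpa [integrable_poissonMeasure_iff] using (hasSum_poisson_mul_exp r t).summable

lemma mgf_poissonMeasure (r : ℝ≥0) (t : ℝ) :
    mgf (fun n : ℕ ↦ (n : ℝ)) (poissonMeasure r) t = exp (r * (exp t - 1)) :=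
  (hasSum_integral_poissonMeasure (integrable_exp_mul_poissonMeasure r t)).unique
    (hasSum_poisson_mul_exp r t)

variable {Ω : Type*} {mΩ : MeasurableSpace Ω} {μ : Measure Ω}

lemma hasLaw_poissonMeasure_of_measureReal_eq [IsFiniteMeasure μ] {Y : Ω → ℕ}
    (hY : Measurable Y) {r : ℝ≥0} (h : ∀ k : ℕ, μ.real {ω | Y ω = k} = exp (-r) * r ^ k / k !) :
    HasLaw Y (poissonMeasure r) μ where
  aemeasurable := hY.aemeasurable
  map_eq := Measure.ext_of_singleton fun k ↦ by
    rw [Measure.map_apply hY (measurableSet_singleton k), poissonMeasure_singleton, ← h k,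
      ofReal_measureReal]
    rfl

lemma HasLaw.integrable_exp_mul_of_poissonMeasure {Y : Ω → ℕ} {r : ℝ≥0}
    (hY : HasLaw Y (poissonMeasure r) μ) (t : ℝ) :
    Integrable (fun ω ↦ exp (t * Y ω)) μ := by
  have := integrable_exp_mul_poissonMeasure r t
  rwa [← hY.map_eq, integrable_map_measure .of_discrete hY.aemeasurable] at this

lemma HasLaw.mgf_eq_of_poissonMeasure {Y : Ω → ℕ} {r : ℝ≥0}
    (hY : HasLaw Y (poissonMeasure r) μ) (t : ℝ) :
    mgf (fun ω ↦ (Y ω : ℝ)) μ t = exp (r * (exp t - 1)) := by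
  rw [← mgf_poissonMeasure r t, ← hY.map_eq, mgf_map hY.aemeasurable .of_discrete]
  rfl

variable [IsProbabilityMeasure μ] {ι : Type*} [Fintype ι] {X : ι → Ω → ℝ} {t : ℝ}

lemma exp_mul_integral_sup'_le_sum_mgf (hι : (univ : Finset ι).Nonempty)
    (hX : ∀ i, Measurable (X i))
    (hint : ∀ i, Integrable (fun ω ↦ exp (t * X i ω)) μ)
    (hmax : Integrable (fun ω ↦ univ.sup' hι fun i ↦ X i ω) μ) :
    exp (t * ∫ ω, univ.sup' hι (fun i ↦ X i ω) ∂μ) ≤ ∑ i, mgf (X i) μ t := by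
  set M : Ω → ℝ := fun ω ↦ univ.sup' hι fun i ↦ X i ω
  have hM : Measurable M := by
    convert Finset.measurable_sup' hι fun i _ ↦ hX i using 1
    exact funext fun ω ↦ (Finset.sup'_apply hι X ω).symm
  have hdom : ∀ ω, exp (t * M ω) ≤ ∑ i, exp (t * X i ω) := fun ω ↦ by
    obtain ⟨i, -, hi⟩ := Finset.exists_mem_eq_sup' hι fun i ↦ X i ω
    simp only [M, hi]
    exact single_le_sum (f := fun i ↦ exp (t * X i ω)) (fun i _ ↦ (exp_pos _).le) (mem_univ i)
  have hsum : Integrable (fun ω ↦ ∑ i, exp (t * X i ω)) μ :=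
    integrable_finsetSum _ fun i _ ↦ hint i
  have hexpM : Integrable (fun ω ↦ exp (t * M ω)) μ :=
    hsum.mono (measurable_exp.comp (hM.const_mul t)).aestronglyMeasurable
      (ae_of_all _ fun ω ↦ by
        simpa [abs_of_nonneg (exp_pos _).le,
          abs_of_nonneg (Finset.sum_nonneg fun i _ ↦ (exp_pos (t * X i ω)).le)] using hdom ω)
  calc exp (t * ∫ ω, M ω ∂μ) = exp (∫ ω, t * M ω ∂μ) := by rw [integral_const_mul]
    _ ≤ ∫ ω, exp (t * M ω) ∂μ :=
      convexOn_exp.map_integral_le continuous_exp.continuousOn isClosed_univ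
        (ae_of_all _ fun _ ↦ Set.mem_univ _) (hmax.const_mul t) hexpM
    _ ≤ ∫ ω, ∑ i, exp (t * X i ω) ∂μ := integral_mono hexpM hsum hdom
    _ = ∑ i, mgf (X i) μ t := integral_finsetSum _ fun i _ ↦ hint i

lemma integral_sup'_le_of_mgf_le (hι : (univ : Finset ι).Nonempty) (ht : 0 < t) {a : ℝ}
    (hX : ∀ i, Measurable (X i))
    (hint : ∀ i, Integrable (fun ω ↦ exp (t * X i ω)) μ)
    (hmax : Integrable (fun ω ↦ univ.sup' hι fun i ↦ X i ω) μ)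
    (hmgf : ∀ i, mgf (X i) μ t ≤ exp a) :
    ∫ ω, univ.sup' hι (fun i ↦ X i ω) ∂μ ≤ (log (Fintype.card ι) + a) / t := by
  have hcard : (0 : ℝ) < Fintype.card ι := by
    exact_mod_cast Fintype.card_pos_iff.mpr (univ_nonempty_iff.mp hι)
  rw [le_div_iff₀' ht, ← exp_le_exp, exp_add, exp_log hcard]
  calc exp (t * ∫ ω, univ.sup' hι (fun i ↦ X i ω) ∂μ) ≤ ∑ i, mgf (X i) μ t :=
        exp_mul_integral_sup'_le_sum_mgf hι hX hint hmax
    _ ≤ ∑ _ : ι, exp a := Finset.sum_le_sum fun i _ ↦ hmgf i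
    _ = Fintype.card ι * exp a := by simp

end ProbabilityTheory

lemma add_mul_exp_one_add_sub_one_div_eq {a lam w : ℝ} (hlam : lam ≠ 0) (hw : 0 < w)
    (hW : w * exp w = (a - lam) / (exp 1 * lam)) :
    (a + lam * (exp (1 + w) - 1)) / (1 + w) = (a - lam) / w := by
  have hexp : lam * exp (1 + w) = (a - lam) / w := by
    have hW' : exp 1 * lam * (w * exp w) = a - lam := by
      rw [hW]
      field_simp
    rw [exp_add, eq_div_iff hw.ne', ← hW']
    ring
  rw [mul_sub, hexp]
  field_simp
  ring

theorem expected_max_poisson_le_lambertW_bound_general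
    {Ω : Type*} [MeasurableSpace Ω] (μ : Measure Ω) [IsProbabilityMeasure μ]
    (n : ℕ) (hn : 0 < n) (Y : Fin n → Ω → ℕ)
    (hmeas : ∀ i, Measurable (Y i))
    (lam : ℝ) (hlam : 0 < lam) (hlamlt : lam < Real.log n)
    (hpois : ∀ i (k : ℕ),
      (μ {ω | Y i ω = k}).toReal = Real.exp (-lam) * lam ^ k / (Nat.factorial k))
    (hmaxint : Integrable (fun ω => (univ.sup' (univ_nonempty_iff.mpr ⟨⟨0, hn⟩⟩)
      fun i => (Y i ω : ℝ))) μ)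
    (W : ℝ → ℝ) (hW : ∀ y, 0 ≤ y → 0 ≤ W y ∧ W y * Real.exp (W y) = y) :
    (∫ ω, (univ.sup' (univ_nonempty_iff.mpr ⟨⟨0, hn⟩⟩) fun i => (Y i ω : ℝ)) ∂μ) ≤
      (Real.log n - lam) / W ((Real.log n - lam) / (Real.exp 1 * lam)) := by
  set c := (Real.log n - lam) / (exp 1 * lam)
  have hc : 0 < c := div_pos (by linarith) (by positivity)
  obtain ⟨hw_nonneg, hw⟩ := hW c hc.le
  have hw_pos : 0 < W c := hw_nonneg.lt_of_ne fun h ↦ by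
    rw [← h, zero_mul] at hw
    exact hc.ne hw
  have hlaw : ∀ i, HasLaw (Y i) (poissonMeasure ⟨lam, hlam.le⟩) μ := fun i ↦
    hasLaw_poissonMeasure_of_measureReal_eq (hmeas i) (hpois i)
  calc _ ≤ (log (Fintype.card (Fin n)) + lam * (exp (1 + W c) - 1)) / (1 + W c) :=
        integral_sup'_le_of_mgf_le _ (by positivity)
          (fun i ↦ measurable_from_nat.comp (hmeas i))
          (fun i ↦ (hlaw i).integrable_exp_mul_of_poissonMeasure _) hmaxint
          (fun i ↦ ((hlaw i).mgf_eq_of_poissonMeasure _).le)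
    _ = (Real.log n - lam) / W c := by
        rw [Fintype.card_fin]
        exact add_mul_exp_one_add_sub_one_div_eq hlam.ne' hw_pos hw

/-- For i.i.d. `Poisson(λ)` variables `Y_1, …, Y_n` with `0 < λ < log n`,
combining the MGF bound with the optimal choice of `t` gives
`E[max_i Y_i] ≤ (log n − λ) / W((log n − λ)/(eλ))`, where `W` is the Lambert W
function, i.e. the inverse of `x ↦ x e^x` on `[0,∞)`. -/
theorem expected_max_poisson_le_lambertW_bound
    {Ω : Type*} [MeasurableSpace Ω] (μ : Measure Ω) [IsProbabilityMeasure μ]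
    (n : ℕ) (hn : 0 < n) (Y : Fin n → Ω → ℕ)
    (hmeas : ∀ i, Measurable (Y i))
    (hindep : iIndepFun Y μ)
    (lam : ℝ) (hlam : 0 < lam) (hlamlt : lam < Real.log n)
    (hpois : ∀ i (k : ℕ),
      (μ {ω | Y i ω = k}).toReal = Real.exp (-lam) * lam ^ k / (Nat.factorial k))
    (hmaxint : Integrable (fun ω => (univ.sup' (univ_nonempty_iff.mpr ⟨⟨0, hn⟩⟩)
      fun i => (Y i ω : ℝ))) μ)
    (W : ℝ → ℝ) (hW : ∀ y, 0 ≤ y → 0 ≤ W y ∧ W y * Real.exp (W y) = y) :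
    (∫ ω, (univ.sup' (univ_nonempty_iff.mpr ⟨⟨0, hn⟩⟩) fun i => (Y i ω : ℝ)) ∂μ) ≤
      (Real.log n - lam) / W ((Real.log n - lam) / (Real.exp 1 * lam)) :=
  expected_max_poisson_le_lambertW_bound_general μ n hn Y hmeas lam hlam hlamlt hpois hmaxint W hW
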